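/- arXiv:1710.03637 — 5 statements merged into one kernel-verified Lean document; each statement's English description precedes it below -/
import Mathlib

section
/- The integral ∫_0^∞ ln(z)/(z²−1) dz equals π²/4. -/
open Real MeasureTheory Set

lemma aux_hasSum_odd : HasSum (fun n : ℕ => (1:ℝ) / (2*n+1)^2) (π^2/8) := by
  set F : ℕ → ℝ := fun n => 1 / (n:ℝ)^2 with hF
  have h : HasSum F (π^2/6) := hasSum_zeta_two
  have he : HasSum (fun k : ℕ => F (2*k)) (π^2/24) := by
    have h2 := h.mul_left (1/4 : ℝ)
    rw [show (1/4 : ℝ) * (π^2/6) = π^2/24 by ring] at h2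
    have hfe : (fun k : ℕ => F (2*k)) = fun k : ℕ => (1/4 : ℝ) * F k := by
      funext k
      simp only [hF]
      push_cast
      rw [mul_pow, one_div, mul_inv, ← one_div, ← one_div]
      norm_num
    rw [hfe]
    exact h2
  have hi : Function.Injective (fun k : ℕ => 2*k+1) := by
    intro a b hab
    dsimp at hab
    omega
  obtain ⟨s, hs⟩ : Summable (fun k : ℕ => F (2*k+1)) := h.summable.comp_injective hi
  have htot : HasSum F (π^2/24 + s) := HasSum.even_add_odd he hs
  have hseq : s = π^2/8 := by
    have := htot.unique h
    linarith
  rw [hseq] at hs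
  have hfo : (fun n : ℕ => (1:ℝ) / (2*n+1)^2) = fun k : ℕ => F (2*k+1) := by
    funext n
    simp only [hF]
    push_cast
    ring
  rw [hfo]
  exact hs

lemma aux_integrable {c : ℝ} (hc : 0 < c) :
    IntegrableOn (fun t : ℝ => t * exp (-(c*t))) (Ioi 0) := by
  have h := integrableOn_rpow_mul_exp_neg_mul_rpow (s := 1) (p := 1) (b := c)
    (by norm_num) one_pos hc
  refine h.congr_fun (fun x hx => ?_) measurableSet_Ioi
  simp [Real.rpow_one, neg_mul]

lemma aux_value {c : ℝ} (hc : 0 < c) :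
    ∫ t in Ioi (0:ℝ), t * exp (-(c*t)) = 1/c^2 := by
  have h := integral_rpow_mul_exp_neg_mul_Ioi (a := 2) (r := c) two_pos hc
  rw [show (2:ℝ) - 1 = 1 by norm_num] at h
  simp_rw [rpow_one] at h
  rw [h, Real.Gamma_two, mul_one, show ((2:ℝ)) = ((2:ℕ):ℝ) by norm_num, rpow_natCast,
    div_pow, one_pow]

-- pointwise identity lemma
lemma aux_pointwise (x : ℝ) :
    exp (-x) * (Real.log (exp (-x)) / ((exp (-x))^2 - 1)) = x / (exp x - exp (-x)) := by
  rcases eq_or_ne x 0 with rfl | hx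
  · simp
  · have hv : exp x ≠ 0 := (exp_pos x).ne'
    have hu : exp (-x) ≠ 0 := (exp_pos _).ne'
    have h1 : (exp (-x))^2 - 1 ≠ 0 := by
      rw [← Real.exp_nat_mul]
      intro h
      have : exp ((2:ℕ) * (-x)) = 1 := by linarith
      rw [Real.exp_eq_one_iff] at this
      push_cast at this
      apply hx
      linarith
    have h2 : exp x - exp (-x) ≠ 0 := by
      intro h
      have : exp x = exp (-x) := by linarith
      have := Real.exp_injective this
      apply hx; linarith
    rw [Real.log_exp]
    field_simp
    have e1 : exp (-x) * exp x = 1 := by rw [← Real.exp_add]; simp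
    linear_combination (-1 : ℝ) * e1

lemma aux_subst :
    ∫ z in Ioi (0:ℝ), Real.log z / (z^2 - 1) = ∫ x : ℝ, x / (exp x - exp (-x)) := by
  have himg : (fun t : ℝ => exp (-t)) '' univ = Ioi 0 := by
    rw [image_univ]
    have hco : (fun t : ℝ => exp (-t)) = exp ∘ (fun t => -t) := rfl
    rw [hco, Function.Surjective.range_comp neg_surjective, Real.range_exp]
  have hder : ∀ x ∈ (univ : Set ℝ),
      HasDerivWithinAt (fun t : ℝ => exp (-t)) (-exp (-x)) univ x := by
    intro x _
    have h1 : HasDerivAt (fun t : ℝ => exp (-t)) (exp (-x) * (-1)) x :=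
      (Real.hasDerivAt_exp (-x)).comp x (hasDerivAt_neg x)
    have h2 : exp (-x) * (-1) = -exp (-x) := by ring
    exact (h2 ▸ h1).hasDerivWithinAt
  have hinj : InjOn (fun t : ℝ => exp (-t)) univ := by
    intro a _ b _ hab
    dsimp at hab
    have := Real.exp_injective hab
    linarith
  have h := integral_image_eq_integral_abs_deriv_smul MeasurableSet.univ hder hinj
    (fun z => Real.log z / (z^2 - 1))
  rw [himg, setIntegral_univ] at h
  rw [h]
  refine integral_congr_ae (ae_of_all _ fun x => ?_)
  dsimp only
  rw [smul_eq_mul, abs_neg, abs_of_pos (exp_pos _)]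
  exact aux_pointwise x

lemma aux_even_int :
    ∫ x : ℝ, x / (exp x - exp (-x)) = 2 * ∫ x in Ioi (0:ℝ), x / (exp x - exp (-x)) := by
  rw [← integral_comp_abs (f := fun x : ℝ => x / (exp x - exp (-x)))]
  refine integral_congr_ae (ae_of_all _ fun x => ?_)
  dsimp only
  rcases le_or_gt 0 x with hx | hx
  · rw [abs_of_nonneg hx]
  · rw [abs_of_neg hx, neg_neg,
      show exp (-x) - exp x = -(exp x - exp (-x)) from (neg_sub _ _).symm,
      div_neg, neg_div, neg_neg]

lemma aux_series {t : ℝ} (ht : 0 < t) :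
    HasSum (fun n : ℕ => t * exp (-((2*n+1) * t))) (t / (exp t - exp (-t))) := by
  have hr1 : exp (-(2*t)) < 1 := by rw [exp_lt_one_iff]; linarith
  have h := (hasSum_geometric_of_lt_one (exp_pos _).le hr1).mul_left (t * exp (-t))
  have hfe : (fun n : ℕ => t * exp (-t) * exp (-(2*t))^n)
      = fun n : ℕ => t * exp (-((2*n+1) * t)) := by
    funext n
    rw [← Real.exp_nat_mul, mul_assoc, ← Real.exp_add]
    ring_nf
  rw [hfe] at h
  have e1 : exp (-t) * exp t = 1 := by rw [← Real.exp_add]; simp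
  have e2 : exp (-t) * exp (-t) = exp (-(2*t)) := by rw [← Real.exp_add]; ring_nf
  have h2 : exp t - exp (-t) ≠ 0 := by
    intro hz
    have := Real.exp_injective (by linarith : exp t = exp (-t))
    linarith
  have h3 : 1 - exp (-(2*t)) ≠ 0 := by
    intro hz
    exact absurd (by linarith : exp (-(2*t)) = 1) (ne_of_lt hr1)
  have hv : t * exp (-t) * (1 - exp (-(2*t)))⁻¹ = t / (exp t - exp (-t)) := by
    rw [← div_eq_mul_inv, div_eq_div_iff h3 h2]
    linear_combination t * e1 - t * e2
  rw [hv] at h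
  exact h

theorem integral_log_div_sq_sub_one :
    ∫ z in Set.Ioi (0 : ℝ), Real.log z / (z ^ 2 - 1) = π ^ 2 / 4 := by
  rw [aux_subst, aux_even_int]
  have hval : ∀ n : ℕ, ∫ x in Ioi (0:ℝ), x * exp (-((2*(n:ℝ)+1) * x)) = 1/(2*(n:ℝ)+1)^2 := by
    intro n
    have h := aux_value (c := 2*(n:ℝ)+1) (by positivity)
    rw [← h]
  have hmeas : ∀ n : ℕ, AEStronglyMeasurable (fun x : ℝ => x * exp (-((2*(n:ℝ)+1) * x)))
      (volume.restrict (Ioi 0)) := by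
    intro n
    exact (continuous_id.mul (Real.continuous_exp.comp (by continuity))).aestronglyMeasurable
  have hlint : ∀ n : ℕ, ∫⁻ x, ‖x * exp (-((2*(n:ℝ)+1) * x))‖ₑ ∂(volume.restrict (Ioi 0))
      = ENNReal.ofReal (1/(2*(n:ℝ)+1)^2) := by
    intro n
    have hint : IntegrableOn (fun x : ℝ => x * exp (-((2*(n:ℝ)+1) * x))) (Ioi 0) := by
      have h := aux_integrable (c := 2*(n:ℝ)+1) (by positivity)
      refine h.congr_fun (fun x hx => ?_) measurableSet_Ioi
      ring_nf
    have hnn : 0 ≤ᵐ[volume.restrict (Ioi (0:ℝ))] fun x : ℝ => x * exp (-((2*(n:ℝ)+1) * x)) := by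
      refine (ae_restrict_iff' measurableSet_Ioi).2 (ae_of_all _ fun x hx => ?_)
      have : (0:ℝ) < x := hx
      positivity
    rw [← hval n, ofReal_integral_eq_lintegral_ofReal hint hnn]
    refine lintegral_congr_ae (hnn.mono fun x hx => ?_)
    simp only [Pi.zero_apply] at hx
    dsimp only
    rw [Real.enorm_eq_ofReal hx]
  have hser : ∫ x in Ioi (0:ℝ), x / (exp x - exp (-x)) = π^2/8 := by
    have hcong : ∫ x in Ioi (0:ℝ), x / (exp x - exp (-x))
        = ∫ x in Ioi (0:ℝ), ∑' n : ℕ, x * exp (-((2*(n:ℝ)+1) * x)) := by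
      refine setIntegral_congr_fun measurableSet_Ioi (fun x hx => ?_)
      exact ((aux_series hx).tsum_eq).symm
    rw [hcong, integral_tsum hmeas ?_]
    · rw [tsum_congr hval, aux_hasSum_odd.tsum_eq]
    · simp_rw [hlint]
      rw [← ENNReal.ofReal_tsum_of_nonneg (fun n => by positivity) aux_hasSum_odd.summable]
      exact ENNReal.ofReal_ne_top
  rw [hser]
  ring
end

section
/- Σ_{n=0}^∞ (−1)^n/(2n+1)^3 = π³/32. -/
open Real

theorem S_three :
    ∑' n : ℕ, (-1 : ℝ) ^ n / (2 * (n : ℝ) + 1) ^ 3 = π ^ 3 / 32 := by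
  have h := hasSum_L_function_mod_four_eval_three
  have hinj : Function.Injective (fun k : ℕ => 2 * k + 1) := fun a b hab => by simpa using hab
  have h2 : HasSum (fun k : ℕ => (-1 : ℝ) ^ k / (2 * (k : ℝ) + 1) ^ 3) (π ^ 3 / 32) := by
    have h3 : HasSum ((fun n : ℕ => (1:ℝ)/(n:ℝ)^3 * Real.sin (π*n/2)) ∘ fun k => 2*k+1) (π^3/32) := by
      refine (hinj.hasSum_iff ?_).mpr h
      intro n hn
      simp only [Set.mem_range, not_exists] at hn
      obtain ⟨m, rfl⟩ : ∃ m, n = 2 * m := by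
        rcases Nat.even_or_odd n with ⟨m, hm⟩ | ⟨m, hm⟩
        · exact ⟨m, by omega⟩
        · exact absurd hm (by intro hc; exact hn m (by omega))
      have : Real.sin (π * (2 * m : ℕ) / 2) = 0 := by
        push_cast
        rw [show π * (2 * (m:ℝ)) / 2 = (m:ℝ) * π by ring]
        exact Real.sin_nat_mul_pi m
      push_cast at this ⊢
      rw [this, mul_zero]
    have heq : (fun k : ℕ => (-1:ℝ)^k/(2*(k:ℝ)+1)^3)
        = ((fun n : ℕ => (1:ℝ)/(n:ℝ)^3 * Real.sin (π*n/2)) ∘ fun k => 2*k+1) := by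
      funext k
      simp only [Function.comp]
      have hcos : Real.cos ((k:ℝ) * π) = (-1:ℝ)^k := by
        simpa using Real.cos_nat_mul_pi_sub 0 k
      have : Real.sin (π * ((2 * k + 1 : ℕ) : ℝ) / 2) = (-1 : ℝ) ^ k := by
        push_cast
        rw [show π * (2 * (k:ℝ) + 1) / 2 = (k:ℝ) * π + π / 2 by ring, Real.sin_add]
        simp [Real.sin_nat_mul_pi, hcos]
      push_cast at this ⊢
      rw [this]
      ring
    rw [heq]
    exact h3
  exact h2.tsum_eq
end

section
/- For natural numbers m < n, ∫_0^∞ t^{m−1}/(t^n − 1) dt = −(π/n) cot(mπ/n), where the integral is interpreted as a Cauchy principal value at t = 1. -/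
open Real Filter MeasureTheory Set intervalIntegral

theorem psi_reflection {a : ℝ} (ha : 0 < a) (ha1 : a < 1) :
    deriv Real.Gamma a / Real.Gamma a - deriv Real.Gamma (1 - a) / Real.Gamma (1 - a)
      = -π * Real.cot (π * a) := by
  have hb : 0 < 1 - a := by linarith
  have hΓa : 0 < Real.Gamma a := Real.Gamma_pos_of_pos ha
  have hΓb : 0 < Real.Gamma (1 - a) := Real.Gamma_pos_of_pos hb
  have hsin : 0 < Real.sin (π * a) := by
    apply Real.sin_pos_of_pos_of_lt_pi
    · positivity
    · nlinarith [Real.pi_pos]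
  have hargs : ∀ {x : ℝ}, 0 < x → ∀ k : ℕ, x ≠ -(k : ℝ) := by
    intro x hx k
    have : (0:ℝ) ≤ (k:ℝ) := Nat.cast_nonneg k
    exact (by linarith : -(k:ℝ) < x).ne'
  have hda : DifferentiableAt ℝ Real.Gamma a :=
    Real.differentiableAt_Gamma (hargs ha)
  have hdb : DifferentiableAt ℝ Real.Gamma (1 - a) :=
    Real.differentiableAt_Gamma (hargs hb)
  have hH : HasDerivAt (fun x => Real.Gamma x * Real.Gamma (1 - x))
      (deriv Real.Gamma a * Real.Gamma (1 - a) +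
        Real.Gamma a * (deriv Real.Gamma (1 - a) * (-1))) a := by
    have h2 : HasDerivAt (fun x : ℝ => Real.Gamma (1 - x))
        (deriv Real.Gamma (1 - a) * (-1)) a := by
      have inner : HasDerivAt (fun x : ℝ => 1 - x) (-1) a := by
        simpa using (hasDerivAt_id a).const_sub 1
      exact (hdb.hasDerivAt).comp a inner
    exact hda.hasDerivAt.mul h2
  have hR : HasDerivAt (fun x => π / Real.sin (π * x))
      (π * (-(Real.cos (π * a) * π) / Real.sin (π * a) ^ 2)) a := by
    have hs : HasDerivAt (fun x : ℝ => Real.sin (π * x)) (Real.cos (π * a) * π) a := by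
      have : HasDerivAt (fun x : ℝ => π * x) π a := by simpa using (hasDerivAt_id a).const_mul π
      exact (Real.hasDerivAt_sin (π * a)).comp a this
    have := (hs.inv (ne_of_gt hsin)).const_mul π
    convert this using 1
    · rfl
    · rfl
    · funext x; simp [div_eq_mul_inv]
  have heq : (fun x => Real.Gamma x * Real.Gamma (1 - x)) = fun x => π / Real.sin (π * x) :=
    funext fun x => Real.Gamma_mul_Gamma_one_sub x
  rw [heq] at hH
  have hkey := hH.unique hR
  have hΓΓ : Real.Gamma a * Real.Gamma (1 - a) = π / Real.sin (π * a) :=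
    Real.Gamma_mul_Gamma_one_sub a
  have hkey2 : deriv Real.Gamma a * Real.Gamma (1 - a) -
      Real.Gamma a * deriv Real.Gamma (1 - a)
      = -(Real.cos (π * a) * π) / Real.sin (π * a) ^ 2 * π := by linarith [hkey]
  rw [Real.cot_eq_cos_div_sin,
    div_sub_div _ _ (ne_of_gt hΓa) (ne_of_gt hΓb), hkey2, hΓΓ]
  field_simp

theorem beta_real {u v : ℝ} (hu : 0 < u) (hv : 0 < v) :
    ∫ x in Ioo (0:ℝ) 1, x ^ (u - 1) * (1 - x) ^ (v - 1)
      = Real.Gamma u * Real.Gamma v / Real.Gamma (u + v) := by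
  have h1 : Complex.Gamma u * Complex.Gamma v
      = Complex.Gamma (u + v) * Complex.betaIntegral u v :=
    Complex.Gamma_mul_Gamma_eq_betaIntegral (by simpa using hu) (by simpa using hv)
  have hae : ∀ᵐ x : ℝ, x ∈ Set.uIoc (0:ℝ) 1 →
      ((x:ℂ) ^ ((u:ℂ) - 1) * ((1:ℂ) - x) ^ ((v:ℂ) - 1))
        = ((x ^ (u - 1) * (1 - x) ^ (v - 1) : ℝ) : ℂ) := by
    have hne : ∀ᵐ x : ℝ, x ≠ 1 := by
      rw [MeasureTheory.ae_iff]
      have : {x : ℝ | ¬x ≠ 1} = {1} := by ext x; simp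
      rw [this]; exact Real.volume_singleton
    filter_upwards [hne] with x hx hmem
    rw [Set.uIoc_of_le (by norm_num : (0:ℝ) ≤ 1)] at hmem
    have hx0 : 0 < x := hmem.1
    have hx1 : x < 1 := lt_of_le_of_ne hmem.2 hx
    rw [Complex.ofReal_mul,
      Complex.ofReal_cpow hx0.le, Complex.ofReal_cpow (by linarith : (0:ℝ) ≤ 1 - x)]
    push_cast
    ring
  have hbeta : Complex.betaIntegral u v
      = ((∫ x in Ioo (0:ℝ) 1, x ^ (u - 1) * (1 - x) ^ (v - 1) : ℝ) : ℂ) := by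
    rw [Complex.betaIntegral]
    rw [intervalIntegral.integral_congr_ae hae]
    rw [intervalIntegral.integral_ofReal]
    congr 1
    rw [intervalIntegral.integral_of_le (by norm_num : (0:ℝ) ≤ 1),
      MeasureTheory.integral_Ioc_eq_integral_Ioo]
  have hΓuv : Complex.Gamma ((u:ℝ) + (v:ℝ) : ℝ) = (Real.Gamma (u + v) : ℂ) :=
    Complex.Gamma_ofReal _
  rw [Complex.Gamma_ofReal, Complex.Gamma_ofReal, hbeta] at h1
  have : ((u:ℂ) + (v:ℂ)) = (((u + v : ℝ)) : ℂ) := by push_cast; ring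
  rw [this, Complex.Gamma_ofReal] at h1
  have hne : Real.Gamma (u + v) ≠ 0 := (Real.Gamma_pos_of_pos (by linarith)).ne'
  have := h1
  rw [← Complex.ofReal_mul, ← Complex.ofReal_mul] at this
  have h2 : Real.Gamma u * Real.Gamma v
      = Real.Gamma (u + v) * ∫ x in Ioo (0:ℝ) 1, x ^ (u - 1) * (1 - x) ^ (v - 1) :=
    Complex.ofReal_injective this
  field_simp
  linarith [h2]

theorem beta_integrable {u v : ℝ} (hu : 0 < u) (hv : 0 < v) :
    IntegrableOn (fun x : ℝ => x ^ (u - 1) * (1 - x) ^ (v - 1)) (Ioo (0:ℝ) 1) := by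
  have h := Complex.betaIntegral_convergent (u := u) (v := v) (by simpa using hu) (by simpa using hv)
  rw [intervalIntegrable_iff, Set.uIoc_of_le (by norm_num : (0:ℝ) ≤ 1)] at h
  have hnorm : IntegrableOn (fun x : ℝ => ‖(x:ℂ) ^ ((u:ℂ) - 1) * ((1:ℂ) - x) ^ ((v:ℂ) - 1)‖)
      (Ioo (0:ℝ) 1) := MeasureTheory.IntegrableOn.mono_set h.norm Set.Ioo_subset_Ioc_self
  apply hnorm.congr_fun ?_ measurableSet_Ioo
  intro x hx
  have hx0 : 0 < x := hx.1
  have hx1 : 0 < 1 - x := by linarith [hx.2]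
  have hc : ((1:ℂ) - (x:ℂ)) = ((1 - x : ℝ) : ℂ) := by push_cast; ring
  dsimp only
  rw [hc, norm_mul,
    Complex.norm_cpow_eq_rpow_re_of_pos hx0,
    Complex.norm_cpow_eq_rpow_re_of_pos hx1]
  norm_num

theorem real_self_mul_Gamma :
    Tendsto (fun s : ℝ => s * Real.Gamma s) (nhdsWithin 0 (Set.Ioi 0)) (nhds 1) := by
  have hC := Complex.tendsto_self_mul_Gamma_nhds_zero
  have hof : Tendsto (fun s : ℝ => (s : ℂ)) (nhdsWithin 0 (Set.Ioi 0))
      (nhdsWithin 0 {(0:ℂ)}ᶜ) := by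
    rw [tendsto_nhdsWithin_iff]
    constructor
    · exact (Complex.continuous_ofReal.tendsto 0).mono_left nhdsWithin_le_nhds
    · filter_upwards [self_mem_nhdsWithin] with s hs
      simpa using (ne_of_gt (show (0:ℝ) < s from hs))
  have := (hC.comp hof)
  have heq : (fun s : ℝ => ((s * Real.Gamma s : ℝ) : ℂ))
      = (fun z : ℂ => z * Complex.Gamma z) ∘ (fun s : ℝ => (s : ℂ)) := by
    funext s
    simp [Complex.Gamma_ofReal]
  have h2 : Tendsto (fun s : ℝ => ((s * Real.Gamma s : ℝ) : ℂ))
      (nhdsWithin 0 (Set.Ioi 0)) (nhds 1) := by rw [heq]; exact this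
  have h3 := (Complex.continuous_re.tendsto 1).comp h2
  simpa [Function.comp_def, ← Complex.ofReal_mul] using h3

theorem tendsto_beta_diff {a b : ℝ} (ha : 0 < a) (hb : 0 < b) :
    Tendsto (fun s : ℝ => Real.Gamma b * Real.Gamma s / Real.Gamma (b + s)
        - Real.Gamma a * Real.Gamma s / Real.Gamma (a + s))
      (nhdsWithin 0 (Set.Ioi 0))
      (nhds (deriv Real.Gamma a / Real.Gamma a - deriv Real.Gamma b / Real.Gamma b)) := by
  have hargs : ∀ {x : ℝ}, 0 < x → ∀ k : ℕ, x ≠ -(k : ℝ) := by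
    intro x hx k
    have : (0:ℝ) ≤ (k:ℝ) := Nat.cast_nonneg k
    exact (by linarith : -(k:ℝ) < x).ne'
  have hΓa : 0 < Real.Gamma a := Real.Gamma_pos_of_pos ha
  have hΓb : 0 < Real.Gamma b := Real.Gamma_pos_of_pos hb
  set φ : ℝ → ℝ := fun s => Real.Gamma b / Real.Gamma (b + s) - Real.Gamma a / Real.Gamma (a + s)
    with hφdef
  have hcomp : ∀ {c : ℝ}, 0 < c → HasDerivAt (fun s : ℝ => Real.Gamma c / Real.Gamma (c + s))
      (-(deriv Real.Gamma c / Real.Gamma c)) 0 := by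
    intro c hc
    have hin : HasDerivAt (fun s : ℝ => c + s) 1 0 := by
      simpa using (hasDerivAt_id (0:ℝ)).const_add c
    have hG : HasDerivAt Real.Gamma (deriv Real.Gamma c) ((fun s : ℝ => c + s) 0) := by
      simpa using (Real.differentiableAt_Gamma (hargs hc)).hasDerivAt
    have hg : HasDerivAt (fun s : ℝ => Real.Gamma (c + s)) (deriv Real.Gamma c * 1) 0 :=
      HasDerivAt.comp 0 hG hin
    have hΓc : Real.Gamma (c + 0) ≠ 0 := by
      simpa using (Real.Gamma_pos_of_pos hc).ne'
    have := (hg.inv (by simpa using hΓc)).const_mul (Real.Gamma c)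
    convert this using 1
    · rfl
    · rfl
    · funext s; simp [div_eq_mul_inv]
    have h0 : Real.Gamma (c + 0) = Real.Gamma c := by norm_num
    rw [h0]
    have : Real.Gamma c ≠ 0 := (Real.Gamma_pos_of_pos hc).ne'
    field_simp
  have hφ : HasDerivAt φ (deriv Real.Gamma a / Real.Gamma a - deriv Real.Gamma b / Real.Gamma b)
      0 := by
    have := (hcomp hb).sub (hcomp ha)
    rw [hφdef]
    convert this using 1
    · rfl
    · rfl
    · rfl
    ring
  have hφ0 : φ 0 = 0 := by simp [hφdef, div_self hΓa.ne', div_self hΓb.ne']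
  have hslope : Tendsto (fun s : ℝ => φ s / s) (nhdsWithin 0 (Set.Ioi 0))
      (nhds (deriv Real.Gamma a / Real.Gamma a - deriv Real.Gamma b / Real.Gamma b)) := by
    have h := hasDerivAt_iff_tendsto_slope.mp hφ
    have h2 : Tendsto (slope φ 0) (nhdsWithin 0 (Set.Ioi 0)) _ :=
      h.mono_left (nhdsWithin_mono 0 (fun x hx => (ne_of_gt hx)))
    refine h2.congr ?_
    intro s
    simp [slope, hφ0, div_eq_inv_mul]
  have hmul := real_self_mul_Gamma.mul hslope
  rw [one_mul] at hmul
  refine hmul.congr' ?_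
  filter_upwards [self_mem_nhdsWithin] with s hs
  have hs0 : s ≠ 0 := ne_of_gt hs
  field_simp [hφdef]
  ring

theorem W_eq_psi {a b : ℝ} (ha : 0 < a) (hb : 0 < b)
    (hint : IntegrableOn (fun x : ℝ => (x ^ (b-1) - x ^ (a-1)) / (1 - x)) (Ioo (0:ℝ) 1)) :
    ∫ x in Ioo (0:ℝ) 1, (x ^ (b-1) - x ^ (a-1)) / (1 - x)
      = deriv Real.Gamma a / Real.Gamma a - deriv Real.Gamma b / Real.Gamma b := by
  set f : ℝ → ℝ := fun x => (x ^ (b-1) - x ^ (a-1)) / (1 - x) with hfdef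
  set F : ℝ → ℝ → ℝ := fun s x => (x ^ (b-1) - x ^ (a-1)) * (1 - x) ^ (s - 1) with hFdef
  have contdiff : ∀ c : ℝ, ContinuousOn (fun x : ℝ => x ^ (c - 1)) (Ioo (0:ℝ) 1) := by
    intro c
    intro x hx
    exact (Real.continuousAt_rpow_const x _ (Or.inl (ne_of_gt hx.1))).continuousWithinAt
  have hdct : Tendsto (fun s => ∫ x in Ioo (0:ℝ) 1, F s x) (nhdsWithin 0 (Set.Ioi 0))
      (nhds (∫ x in Ioo (0:ℝ) 1, f x)) := by
    apply MeasureTheory.tendsto_integral_filter_of_dominated_convergence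
      (fun x => ‖f x‖)
    · filter_upwards with s
      apply ContinuousOn.aestronglyMeasurable ?_ measurableSet_Ioo
      apply ContinuousOn.mul (((contdiff b).sub (contdiff a)))
      intro x hx
      have h1x : 0 < 1 - x := by linarith [hx.2]
      have : ContinuousAt (fun x : ℝ => (1 - x) ^ (s - 1)) x := by
        have := Real.continuousAt_rpow_const (1 - x) (s - 1) (Or.inl (ne_of_gt h1x))
        exact this.comp (by fun_prop)
      exact this.continuousWithinAt
    · filter_upwards [Ioo_mem_nhdsGT_of_mem (by norm_num : (0:ℝ) ∈ Set.Ico 0 1)] with s hs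
      rw [MeasureTheory.ae_restrict_iff' measurableSet_Ioo]
      filter_upwards with x hx
      have h1x : 0 < 1 - x := by linarith [hx.2]
      have hsplit : (1 - x) ^ (s - 1) = (1 - x) ^ s * (1 - x)⁻¹ := by
        rw [show s - 1 = s + (-1) by ring, Real.rpow_add h1x, Real.rpow_neg_one]
      have hle : (1 - x) ^ s ≤ 1 :=
        Real.rpow_le_one h1x.le (by linarith [hx.1]) hs.1.le
      have hnn : (0:ℝ) ≤ (1 - x) ^ s := Real.rpow_nonneg h1x.le _
      rw [hFdef, hfdef]
      simp only [norm_mul, Real.norm_eq_abs, abs_div]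
      rw [hsplit, abs_mul]
      rw [abs_of_pos h1x]
      rw [abs_of_nonneg hnn, abs_inv, abs_of_pos h1x]
      have h1 : |x ^ (b-1) - x ^ (a-1)| * ((1 - x) ^ s * (1 - x)⁻¹)
          ≤ |x ^ (b-1) - x ^ (a-1)| * (1 * (1 - x)⁻¹) := by
        apply mul_le_mul_of_nonneg_left ?_ (abs_nonneg _)
        exact mul_le_mul_of_nonneg_right hle (by positivity)
      calc |x ^ (b-1) - x ^ (a-1)| * ((1 - x) ^ s * (1 - x)⁻¹)
          ≤ |x ^ (b-1) - x ^ (a-1)| * (1 * (1 - x)⁻¹) := h1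
        _ = |x ^ (b-1) - x ^ (a-1)| / (1 - x) := by rw [one_mul, div_eq_mul_inv]
    · exact hint.norm
    · rw [MeasureTheory.ae_restrict_iff' measurableSet_Ioo]
      filter_upwards with x hx
      have h1x : 0 < 1 - x := by linarith [hx.2]
      have hexp : (fun s : ℝ => F s x)
          = fun s => (x ^ (b-1) - x ^ (a-1)) * Real.exp (Real.log (1 - x) * (s - 1)) := by
        funext s
        rw [hFdef]
        simp only
        rw [Real.rpow_def_of_pos h1x]
      have hcont : Continuous (fun s : ℝ =>
          (x ^ (b-1) - x ^ (a-1)) * Real.exp (Real.log (1 - x) * (s - 1))) := by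
        fun_prop
      have := (hcont.tendsto 0).mono_left (nhdsWithin_le_nhds (s := Set.Ioi (0:ℝ)))
      rw [← hexp] at this
      convert this using 2
      rw [hfdef]
      simp only
      rw [div_eq_mul_inv]
      congr 1
      rw [show Real.log (1 - x) * (0 - 1) = -Real.log (1-x) by ring, Real.exp_neg,
        Real.exp_log h1x]
  have heq : ∀ᶠ s in nhdsWithin (0:ℝ) (Set.Ioi 0),
      Real.Gamma b * Real.Gamma s / Real.Gamma (b + s)
        - Real.Gamma a * Real.Gamma s / Real.Gamma (a + s)
      = ∫ x in Ioo (0:ℝ) 1, F s x := by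
    filter_upwards [self_mem_nhdsWithin] with s hs
    have hs0 : 0 < s := hs
    have h1 : ∫ x in Ioo (0:ℝ) 1, F s x
        = (∫ x in Ioo (0:ℝ) 1, x ^ (b-1) * (1-x) ^ (s-1))
          - ∫ x in Ioo (0:ℝ) 1, x ^ (a-1) * (1-x) ^ (s-1) := by
      rw [← MeasureTheory.integral_sub (beta_integrable hb hs0) (beta_integrable ha hs0)]
      apply MeasureTheory.setIntegral_congr_fun measurableSet_Ioo
      intro x hx
      rw [hFdef]
      simp only
      ring
    rw [h1, beta_real hb hs0, beta_real ha hs0]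
  have h2 : Tendsto (fun s => ∫ x in Ioo (0:ℝ) 1, F s x) (nhdsWithin 0 (Set.Ioi 0))
      (nhds (deriv Real.Gamma a / Real.Gamma a - deriv Real.Gamma b / Real.Gamma b)) :=
    (tendsto_beta_diff ha hb).congr' heq
  exact tendsto_nhds_unique hdct h2

lemma pow_ne_one' {t : ℝ} (ht : 0 ≤ t) (ht1 : t ≠ 1) {n : ℕ} (hn : n ≠ 0) : t ^ n ≠ 1 := by
  rcases lt_or_gt_of_ne ht1 with h | h
  · exact ne_of_lt (pow_lt_one₀ ht h hn)
  · exact ne_of_gt (one_lt_pow₀ h hn)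

lemma image_pow {n : ℕ} (hn : n ≠ 0) : (fun t : ℝ => t ^ n) '' Ioo 0 1 = Ioo (0:ℝ) 1 := by
  ext x
  simp only [mem_image, mem_Ioo]
  constructor
  · rintro ⟨t, ⟨ht0, ht1⟩, rfl⟩
    exact ⟨pow_pos ht0 n, pow_lt_one₀ ht0.le ht1 hn⟩
  · rintro ⟨hx0, hx1⟩
    refine ⟨x ^ ((n:ℝ)⁻¹), ⟨Real.rpow_pos_of_pos hx0 _, Real.rpow_lt_one hx0.le hx1 (by positivity)⟩, ?_⟩
    rw [← Real.rpow_natCast (x ^ ((n:ℝ)⁻¹)) n, ← Real.rpow_mul hx0.le,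
      inv_mul_cancel₀ (by exact_mod_cast hn), Real.rpow_one]

lemma image_inv {c : ℝ} (hc : 0 < c) : (fun u : ℝ => u⁻¹) '' Ioo 0 c = Ioi c⁻¹ := by
  ext x
  simp only [mem_image, mem_Ioo, mem_Ioi]
  constructor
  · rintro ⟨u, ⟨hu0, huc⟩, rfl⟩
    exact (inv_lt_inv₀ hc hu0).mpr huc
  · intro hx
    have hx0 : 0 < x := lt_trans (inv_pos.mpr hc) hx
    refine ⟨x⁻¹, ⟨inv_pos.mpr hx0, ?_⟩, inv_inv x⟩
    calc x⁻¹ < (c⁻¹)⁻¹ := by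
          exact (inv_lt_inv₀ hx0 (inv_pos.mpr hc)).mpr hx
      _ = c := inv_inv c

lemma key_inv {m n : ℕ} (hm : 1 ≤ m) (hmn : m < n) {u : ℝ} (hu0 : 0 < u) (hu1 : u < 1) :
    ((u^2)⁻¹) * ((u⁻¹) ^ (m-1) / ((u⁻¹) ^ n - 1)) = u ^ (n-m-1) / (1 - u ^ n) := by
  have hun : u ^ n < 1 := pow_lt_one₀ hu0.le hu1 (by omega)
  have h0 : u ≠ 0 := ne_of_gt hu0
  have h2 : (1:ℝ) - u ^ n ≠ 0 := by linarith
  have hsplit : u ^ n = u ^ (n-m-1) * u ^ 2 * u ^ (m-1) := by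
    rw [← pow_add, ← pow_add]; congr 1; omega
  rw [inv_pow, inv_pow]
  have h3 : (u ^ n)⁻¹ - 1 = (1 - u ^ n) / u ^ n := by field_simp
  rw [h3, div_div_eq_mul_div]
  rw [mul_div_assoc', div_eq_div_iff (by exact h2) h2]
  have : (u^2)⁻¹ * ((u ^ (m-1))⁻¹ * u ^ n) = u ^ (n-m-1) := by
    rw [hsplit]
    field_simp
  rw [this]

lemma cov_inv {m n : ℕ} (hm : 1 ≤ m) (hmn : m < n) {ε : ℝ} (hε : 0 < ε) :
    ∫ t in Ioi ((1:ℝ)+ε), t ^ (m-1) / (t ^ n - 1)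
      = ∫ u in Ioo (0:ℝ) (1+ε)⁻¹, u ^ (n-m-1) / (1 - u ^ n) := by
  have hc : (0:ℝ) < (1+ε)⁻¹ := by positivity
  have hc1 : (1+ε)⁻¹ < 1 := by
    rw [inv_lt_one_iff₀]; right; linarith
  have himg : (fun u : ℝ => u⁻¹) '' Ioo 0 ((1+ε)⁻¹) = Ioi (1+ε) := by
    rw [image_inv hc, inv_inv]
  rw [← himg]
  rw [MeasureTheory.integral_image_eq_integral_abs_deriv_smul measurableSet_Ioo
    (fun u hu => (hasDerivAt_inv (ne_of_gt hu.1)).hasDerivWithinAt)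
    (inv_injective.injOn) (fun t => t ^ (m-1) / (t ^ n - 1))]
  apply MeasureTheory.setIntegral_congr_fun measurableSet_Ioo
  intro u hu
  have hu0 : 0 < u := hu.1
  have hu1 : u < 1 := lt_trans hu.2 hc1
  have habs : |(-(u^2)⁻¹)| = (u^2)⁻¹ := by
    rw [abs_neg, abs_of_pos (by positivity)]
  dsimp only
  rw [smul_eq_mul, habs]
  exact key_inv hm hmn hu0 hu1

lemma key_pow {m n : ℕ} (hm : 1 ≤ m) (hmn : m < n) {t : ℝ} (ht0 : 0 < t) (ht1 : t < 1) :
    |((n:ℝ) * t ^ (n-1))| * (((t ^ n) ^ (((n-m : ℕ):ℝ)/(n:ℝ) - 1)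
        - (t ^ n) ^ (((m : ℕ):ℝ)/(n:ℝ) - 1)) / (1 - t ^ n))
      = (n:ℝ) * ((t ^ (n-m-1) - t ^ (m-1)) / (1 - t ^ n)) := by
  have hn0 : (n:ℝ) ≠ 0 := Nat.cast_ne_zero.mpr (by omega)
  have habs : |((n:ℝ) * t ^ (n-1))| = (n:ℝ) * t ^ (n-1) := abs_of_pos (by positivity)
  have hpow : ∀ j : ℕ, 1 ≤ j → j < n → (t ^ n) ^ (((j : ℕ):ℝ)/(n:ℝ) - 1) = t ^ ((j:ℝ) - n) := by
    intro j hj hjn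
    rw [← Real.rpow_natCast t n, ← Real.rpow_mul ht0.le]
    congr 1
    field_simp
  have hmul : ∀ j : ℕ, 1 ≤ j → j < n → t ^ (n-1) * t ^ ((j:ℝ) - n) = t ^ (j - 1 : ℕ) := by
    intro j hj hjn
    rw [← Real.rpow_natCast t (n-1), ← Real.rpow_natCast t (j-1), ← Real.rpow_add ht0]
    congr 1
    have h1 : ((n - 1 : ℕ) : ℝ) = (n:ℝ) - 1 := by
      have : 1 ≤ n := by omega
      push_cast [Nat.cast_sub this]; ring
    have h2 : ((j - 1 : ℕ) : ℝ) = (j:ℝ) - 1 := by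
      push_cast [Nat.cast_sub hj]; ring
    rw [h1, h2]; ring
  rw [habs, hpow (n-m) (by omega) (by omega), hpow m hm hmn]
  have e1 : t ^ (n-1) * t ^ ((((n-m):ℕ):ℝ) - (n:ℝ)) = t ^ (n - m - 1) := by
    exact hmul (n-m) (by omega) (by omega)
  have e2 : t ^ (n-1) * t ^ (((m:ℕ):ℝ) - (n:ℝ)) = t ^ (m - 1) := hmul m hm hmn
  have hun : t ^ n < 1 := pow_lt_one₀ ht0.le ht1 (by omega)
  have hD : (1:ℝ) - t ^ n ≠ 0 := by linarith
  field_simp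

  linear_combination e1 - e2

lemma pow_strictMono_aux {n : ℕ} (hn : n ≠ 0) :
    Set.InjOn (fun t : ℝ => t ^ n) (Ioo 0 1) := by
  have h : StrictMonoOn (fun t : ℝ => t ^ n) (Set.Ici 0) :=
    fun x hx y hy hxy => pow_lt_pow_left₀ hxy hx hn
  exact (h.injOn).mono (fun x hx => le_of_lt hx.1)

lemma cov_pow {m n : ℕ} (hm : 1 ≤ m) (hmn : m < n) :
    ∫ x in Ioo (0:ℝ) 1, (x ^ (((n-m:ℕ):ℝ)/(n:ℝ) - 1) - x ^ (((m:ℕ):ℝ)/(n:ℝ) - 1)) / (1 - x)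
      = (n:ℝ) * ∫ t in Ioo (0:ℝ) 1, (t ^ (n-m-1) - t ^ (m-1)) / (1 - t ^ n) := by
  conv_lhs => rw [← image_pow (by omega : n ≠ 0)]
  rw [MeasureTheory.integral_image_eq_integral_abs_deriv_smul measurableSet_Ioo
    (fun t _ => (hasDerivAt_pow n t).hasDerivWithinAt)
    (pow_strictMono_aux (by omega))]
  rw [← MeasureTheory.integral_const_mul]
  apply MeasureTheory.setIntegral_congr_fun measurableSet_Ioo
  intro t ht
  dsimp only
  rw [smul_eq_mul]
  exact key_pow hm hmn ht.1 ht.2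

lemma f_integrable {m n : ℕ} (hm : 1 ≤ m) (hmn : m < n)
    (hg : IntegrableOn (fun t : ℝ => (t ^ (n-m-1) - t ^ (m-1)) / (1 - t ^ n)) (Ioo (0:ℝ) 1)) :
    IntegrableOn (fun x : ℝ => (x ^ (((n-m:ℕ):ℝ)/(n:ℝ) - 1) - x ^ (((m:ℕ):ℝ)/(n:ℝ) - 1)) / (1 - x))
      (Ioo (0:ℝ) 1) := by
  rw [← image_pow (by omega : n ≠ 0)]
  rw [MeasureTheory.integrableOn_image_iff_integrableOn_abs_deriv_smul measurableSet_Ioo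
    (fun t _ => (hasDerivAt_pow n t).hasDerivWithinAt)
    (pow_strictMono_aux (by omega))]
  apply MeasureTheory.IntegrableOn.congr_fun (hg.const_mul (n:ℝ)) ?_ measurableSet_Ioo
  intro t ht
  dsimp only
  rw [smul_eq_mul]
  exact (key_pow hm hmn ht.1 ht.2).symm

lemma G_eq {m n : ℕ} (hm : 1 ≤ m) (hmn : m < n) {t : ℝ} (ht : 0 ≤ t) (ht1 : t ≠ 1) :
    ((∑ i ∈ Finset.range (m-1), t^i) - ∑ i ∈ Finset.range (n-m-1), t^i)
      / (∑ i ∈ Finset.range n, t^i)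
    = (t ^ (n-m-1) - t ^ (m-1)) / (1 - t ^ n) := by
  have h1 : t - 1 ≠ 0 := sub_ne_zero.mpr ht1
  have h2 : t ^ n - 1 ≠ 0 := sub_ne_zero.mpr (pow_ne_one' ht ht1 (by omega))
  have h3 : (1:ℝ) - t ^ n ≠ 0 := fun h => h2 (by linarith)
  rw [geom_sum_eq ht1, geom_sum_eq ht1, geom_sum_eq ht1]
  rw [div_sub_div_same]
  have hnum : (t ^ (m-1) - 1) - (t ^ (n-m-1) - 1) = t ^ (m-1) - t ^ (n-m-1) := by ring
  rw [hnum, div_div_div_cancel_right₀]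
  rw [div_eq_div_iff h2 h3]
  ring
  exact h1

lemma G_contOn {m n : ℕ} (hmn : m < n) :
    ContinuousOn (fun t : ℝ => ((∑ i ∈ Finset.range (m-1), t^i) - ∑ i ∈ Finset.range (n-m-1), t^i)
      / (∑ i ∈ Finset.range n, t^i)) (Icc (0:ℝ) 1) := by
  have csum : ∀ j : ℕ, Continuous (fun t : ℝ => ∑ i ∈ Finset.range j, t^i) :=
    fun j => continuous_finset_sum _ fun i _ => continuous_pow i
  apply ContinuousOn.div (((csum _).sub (csum _)).continuousOn) ((csum n).continuousOn)
  intro t ht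
  have : (1:ℝ) ≤ ∑ i ∈ Finset.range n, t^i := by
    have h0 : (0:ℕ) ∈ Finset.range n := Finset.mem_range.mpr (by omega)
    have := Finset.single_le_sum (f := fun i => t^i)
      (fun i _ => pow_nonneg ht.1 i) h0
    simpa using this
  linarith

lemma cont_ratio {n j : ℕ} (hn : n ≠ 0) {c : ℝ} (hc : c < 1) :
    ContinuousOn (fun u : ℝ => u ^ j / (1 - u ^ n)) (Icc (0:ℝ) c) := by
  apply ContinuousOn.div (by fun_prop) (by fun_prop)
  intro u hu
  have : u ^ n ≠ 1 := pow_ne_one' hu.1 (by linarith [hu.2] : u ≠ 1) hn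
  intro h
  exact this (by linarith)

lemma part1 {m n : ℕ} (hm : 1 ≤ m) (hmn : m < n) :
    Tendsto (fun ε : ℝ =>
      (∫ t in Ioo (0:ℝ) (1-ε), t ^ (m-1) / (t ^ n - 1)) +
        ∫ t in Ioi (1+ε), t ^ (m-1) / (t ^ n - 1))
      (nhdsWithin 0 (Ioi 0))
      (nhds (∫ t in (0:ℝ)..1, ((∑ i ∈ Finset.range (m-1), t^i)
        - ∑ i ∈ Finset.range (n-m-1), t^i) / (∑ i ∈ Finset.range n, t^i))) := by
  set G : ℝ → ℝ := fun t => ((∑ i ∈ Finset.range (m-1), t^i)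
    - ∑ i ∈ Finset.range (n-m-1), t^i) / (∑ i ∈ Finset.range n, t^i) with hGdef
  set h : ℝ → ℝ := fun u => u ^ (n-m-1) / (1 - u ^ n) with hhdef
  set h' : ℝ → ℝ := fun u => u ^ (m-1) / (1 - u ^ n) with hh'def
  have hn0 : n ≠ 0 := by omega
  -- interval integrability of h, h' on subintervals of [0, c], c < 1
  have hii : ∀ (f : ℝ → ℝ), (∀ c : ℝ, c < 1 → ContinuousOn f (Icc 0 c)) →
      ∀ x y : ℝ, 0 ≤ x → x ≤ y → y < 1 → IntervalIntegrable f volume x y := by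
    intro f hf x y hx hxy hy
    apply ContinuousOn.intervalIntegrable
    apply (hf y hy).mono
    rw [Set.uIcc_of_le hxy]
    exact fun t htt => ⟨le_trans hx htt.1, htt.2⟩
  have hcont_h : ∀ c : ℝ, c < 1 → ContinuousOn h (Icc 0 c) := fun c hc => cont_ratio hn0 hc
  have hcont_h' : ∀ c : ℝ, c < 1 → ContinuousOn h' (Icc 0 c) := fun c hc => cont_ratio hn0 hc
  -- bound for G on [0,1]
  obtain ⟨C, hC⟩ : ∃ C, ∀ t ∈ Icc (0:ℝ) 1, ‖G t‖ ≤ C :=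
    (isCompact_Icc.exists_bound_of_continuousOn (G_contOn hmn))
  have hC0 : 0 ≤ C := le_trans (norm_nonneg _) (hC 0 (by norm_num))
  have hGii : ∀ x y : ℝ, 0 ≤ x → x ≤ y → y ≤ 1 → IntervalIntegrable G volume x y := by
    intro x y hx hxy hy
    apply ContinuousOn.intervalIntegrable
    apply (G_contOn hmn).mono
    intro t htt
    rw [Set.uIcc_of_le hxy] at htt
    exact ⟨le_trans hx htt.1, le_trans htt.2 hy⟩
  have hev : ∀ᶠ ε in nhdsWithin (0:ℝ) (Ioi 0),
      ((∫ t in Ioo (0:ℝ) (1-ε), t ^ (m-1) / (t ^ n - 1)) +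
        ∫ t in Ioi (1+ε), t ^ (m-1) / (t ^ n - 1))
      = (∫ t in (0:ℝ)..(1-ε), G t) + ∫ u in (1-ε)..((1+ε)⁻¹), h u := by
    filter_upwards [Ioo_mem_nhdsGT_of_mem (by norm_num : (0:ℝ) ∈ Ico (0:ℝ) 1)] with ε hε
    obtain ⟨hε0, hε1⟩ := hε
    have hc0 : (0:ℝ) < (1+ε)⁻¹ := by positivity
    have hc1 : (1+ε)⁻¹ < 1 := by rw [inv_lt_one_iff₀]; right; linarith
    have hcm : (1-ε) ≤ (1+ε)⁻¹ := by
      rw [le_inv_comm₀ (by linarith) (by linarith), inv_eq_one_div,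
        le_div_iff₀ (by linarith)]
      nlinarith
    have hA : (∫ t in Ioo (0:ℝ) (1-ε), t ^ (m-1) / (t ^ n - 1))
        = - ∫ t in (0:ℝ)..(1-ε), h' t := by
      have hpt : ∀ t : ℝ, t ^ (m-1) / (t ^ n - 1) = -(h' t) := by
        intro t
        rw [hh'def]
        simp only
        rw [show t ^ n - 1 = -(1 - t ^ n) by ring, div_neg]
      simp_rw [hpt]
      rw [MeasureTheory.integral_neg, intervalIntegral.integral_of_le (by linarith),
        MeasureTheory.integral_Ioc_eq_integral_Ioo]
    have hB : (∫ t in Ioi ((1:ℝ)+ε), t ^ (m-1) / (t ^ n - 1))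
        = ∫ u in (0:ℝ)..((1+ε)⁻¹), h u := by
      rw [cov_inv hm hmn hε0, intervalIntegral.integral_of_le hc0.le,
        MeasureTheory.integral_Ioc_eq_integral_Ioo]
    rw [hA, hB]
    have hsplit : (∫ u in (0:ℝ)..((1+ε)⁻¹), h u)
        = (∫ u in (0:ℝ)..(1-ε), h u) + ∫ u in (1-ε)..((1+ε)⁻¹), h u :=
      (intervalIntegral.integral_add_adjacent_intervals
        (hii h hcont_h 0 (1-ε) le_rfl (by linarith) (by linarith))
        (hii h hcont_h (1-ε) ((1+ε)⁻¹) (by linarith) hcm hc1)).symm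
    rw [hsplit]
    have hGsub : (∫ u in (0:ℝ)..(1-ε), h u) - (∫ t in (0:ℝ)..(1-ε), h' t)
        = ∫ t in (0:ℝ)..(1-ε), G t := by
      rw [← intervalIntegral.integral_sub
        (hii h hcont_h 0 (1-ε) le_rfl (by linarith) (by linarith))
        (hii h' hcont_h' 0 (1-ε) le_rfl (by linarith) (by linarith))]
      apply intervalIntegral.integral_congr
      intro t htt
      rw [Set.uIcc_of_le (by linarith)] at htt
      rw [hGdef]
      simp only
      rw [G_eq hm hmn htt.1 (by intro hh; rw [hh] at htt; linarith [htt.2])]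
      rw [hhdef, hh'def]
      simp only
      rw [← sub_div]
    linarith [hGsub]
  have T1 : Tendsto (fun ε : ℝ => ∫ t in (0:ℝ)..(1-ε), G t) (nhdsWithin 0 (Ioi 0))
      (nhds (∫ t in (0:ℝ)..1, G t)) := by
    rw [tendsto_iff_dist_tendsto_zero]
    have hb : ∀ᶠ ε in nhdsWithin (0:ℝ) (Ioi 0),
        dist (∫ t in (0:ℝ)..(1-ε), G t) (∫ t in (0:ℝ)..1, G t) ≤ C * ε := by
      filter_upwards [Ioo_mem_nhdsGT_of_mem (by norm_num : (0:ℝ) ∈ Ico (0:ℝ) 1)] with ε hε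
      obtain ⟨hε0, hε1⟩ := hε
      have hadj : (∫ t in (0:ℝ)..1, G t)
          = (∫ t in (0:ℝ)..(1-ε), G t) + ∫ t in (1-ε)..1, G t :=
        (intervalIntegral.integral_add_adjacent_intervals
          (hGii 0 (1-ε) le_rfl (by linarith) (by linarith))
          (hGii (1-ε) 1 (by linarith) (by linarith) le_rfl)).symm
      rw [Real.dist_eq, hadj]
      have heq : (∫ t in (0:ℝ)..(1-ε), G t) - ((∫ t in (0:ℝ)..(1-ε), G t) + ∫ t in (1-ε)..1, G t)
          = -(∫ t in (1-ε)..1, G t) := by ring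
      rw [heq, abs_neg, ← Real.norm_eq_abs]
      calc ‖∫ t in (1-ε)..1, G t‖ ≤ C * |1 - (1-ε)| := by
            apply intervalIntegral.norm_integral_le_of_norm_le_const
            intro u hu
            rw [Set.uIoc_of_le (by linarith)] at hu
            exact hC u ⟨by linarith [hu.1], hu.2⟩
        _ = C * ε := by rw [show (1:ℝ) - (1-ε) = ε by ring, abs_of_pos hε0]
    have hg : Tendsto (fun ε : ℝ => C * ε) (nhdsWithin 0 (Ioi 0)) (nhds 0) := by
      have : Tendsto (fun ε : ℝ => C * ε) (nhds 0) (nhds (C * 0)) :=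
        (continuous_const.mul continuous_id).tendsto 0
      rw [mul_zero] at this
      exact this.mono_left nhdsWithin_le_nhds
    exact squeeze_zero' (Filter.Eventually.of_forall fun ε => dist_nonneg) hb hg
  have T2 : Tendsto (fun ε : ℝ => ∫ u in (1-ε)..((1+ε)⁻¹), h u) (nhdsWithin 0 (Ioi 0))
      (nhds 0) := by
    rw [tendsto_iff_dist_tendsto_zero]
    have hid : Tendsto (fun ε : ℝ => ε) (nhdsWithin 0 (Ioi 0)) (nhds 0) :=
      tendsto_id.mono_left nhdsWithin_le_nhds
    refine squeeze_zero' (Filter.Eventually.of_forall fun ε => dist_nonneg) ?_ hid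
    filter_upwards [Ioo_mem_nhdsGT_of_mem (by norm_num : (0:ℝ) ∈ Ico (0:ℝ) 1)] with ε hε
    obtain ⟨hε0, hε1⟩ := hε
    have hc0 : (0:ℝ) < (1+ε)⁻¹ := by positivity
    have hc1 : (1+ε)⁻¹ < 1 := by rw [inv_lt_one_iff₀]; right; linarith
    have hcm : (1-ε) ≤ (1+ε)⁻¹ := by
      rw [le_inv_comm₀ (by linarith) (by linarith), inv_eq_one_div,
        le_div_iff₀ (by linarith)]
      nlinarith
    rw [Real.dist_eq, sub_zero, ← Real.norm_eq_abs]
    calc ‖∫ u in (1-ε)..((1+ε)⁻¹), h u‖ ≤ ((1+ε)/ε) * |(1+ε)⁻¹ - (1-ε)| := by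
          apply intervalIntegral.norm_integral_le_of_norm_le_const
          intro u hu
          rw [Set.uIoc_of_le hcm] at hu
          have hu0 : 0 < u := lt_of_le_of_lt (by linarith : (0:ℝ) ≤ 1-ε) hu.1
          have hu1 : u < 1 := lt_of_le_of_lt hu.2 hc1
          have hun : u ^ n < 1 := pow_lt_one₀ hu0.le hu1 (by omega)
          have hden : 0 < 1 - u ^ n := by linarith
          have hnum : u ^ (n-m-1) ≤ 1 := pow_le_one₀ hu0.le hu1.le
          have h1u : 0 < 1 - u := by linarith
          have huun : u ^ n ≤ u := pow_le_of_le_one hu0.le hu1.le (by omega)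
          have h2 : 1 - u ≤ 1 - u ^ n := by linarith
          have hinv : 1 - (1+ε)⁻¹ = ε/(1+ε) := by field_simp; ring
          have h3 : ε/(1+ε) ≤ 1 - u := by
            rw [← hinv]
            linarith [hu.2]
          have hfrac : (0:ℝ) < ε/(1+ε) := by positivity
          rw [hhdef, Real.norm_eq_abs]
          simp only
          rw [abs_of_nonneg (by positivity)]
          calc u ^ (n-m-1) / (1 - u ^ n) ≤ 1 / (1 - u) := by gcongr
            _ ≤ 1 / (ε/(1+ε)) := by
                apply one_div_le_one_div_of_le hfrac
                linarith
            _ = (1+ε)/ε := by rw [one_div_div]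
      _ = ε := by
          rw [abs_of_nonneg (by linarith)]
          field_simp
          ring
  have hfinal := T1.add T2
  rw [add_zero] at hfinal
  exact hfinal.congr' (hev.mono fun ε hε => hε.symm)

theorem pv_integral_pow_div_pow_sub_one (m n : ℕ) (hm : 0 < m) (hmn : m < n) :
    Filter.Tendsto
      (fun ε : ℝ =>
        (∫ t in Set.Ioo (0 : ℝ) (1 - ε), t ^ (m - 1) / (t ^ n - 1)) +
          ∫ t in Set.Ioi (1 + ε), t ^ (m - 1) / (t ^ n - 1))
      (nhdsWithin 0 (Set.Ioi 0))
      (nhds (-(π / (n : ℝ)) * Real.cot ((m : ℝ) * π / (n : ℝ)))) := by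
  have hm1 : 1 ≤ m := hm
  have hpart1 := part1 hm1 hmn
  suffices hval : (∫ t in (0:ℝ)..1, ((∑ i ∈ Finset.range (m-1), t^i)
        - ∑ i ∈ Finset.range (n-m-1), t^i) / (∑ i ∈ Finset.range n, t^i))
      = -(π / (n : ℝ)) * Real.cot ((m : ℝ) * π / (n : ℝ)) by
    rw [← hval]
    exact hpart1
  set a : ℝ := ((m:ℕ):ℝ)/(n:ℝ) with hadef
  set b : ℝ := ((n-m:ℕ):ℝ)/(n:ℝ) with hbdef
  have hnpos : (0:ℝ) < (n:ℝ) := by exact_mod_cast (by omega : 0 < n)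
  have ha : 0 < a := by
    rw [hadef]; positivity
  have ha1 : a < 1 := by
    rw [hadef, div_lt_one hnpos]
    exact_mod_cast hmn
  have hb : 0 < b := by
    rw [hbdef]
    have : (0:ℝ) < ((n-m:ℕ):ℝ) := by exact_mod_cast (by omega : 0 < n - m)
    positivity
  have hb_eq : b = 1 - a := by
    rw [hbdef, hadef]
    rw [Nat.cast_sub (le_of_lt hmn)]
    field_simp
  -- integrability of g
  have hGIcc : IntegrableOn (fun t : ℝ => ((∑ i ∈ Finset.range (m-1), t^i)
      - ∑ i ∈ Finset.range (n-m-1), t^i) / (∑ i ∈ Finset.range n, t^i)) (Icc (0:ℝ) 1) :=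
    (G_contOn hmn).integrableOn_Icc
  have hg_int : IntegrableOn (fun t : ℝ => (t ^ (n-m-1) - t ^ (m-1)) / (1 - t ^ n))
      (Ioo (0:ℝ) 1) := by
    apply MeasureTheory.IntegrableOn.congr_fun
      (MeasureTheory.IntegrableOn.mono_set hGIcc Ioo_subset_Icc_self) ?_ measurableSet_Ioo
    intro t ht
    exact G_eq hm1 hmn ht.1.le (ne_of_lt ht.2)
  -- e1 : interval integral of G equals set integral of g
  have e1 : (∫ t in (0:ℝ)..1, ((∑ i ∈ Finset.range (m-1), t^i)
        - ∑ i ∈ Finset.range (n-m-1), t^i) / (∑ i ∈ Finset.range n, t^i))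
      = ∫ t in Ioo (0:ℝ) 1, (t ^ (n-m-1) - t ^ (m-1)) / (1 - t ^ n) := by
    rw [intervalIntegral.integral_of_le zero_le_one, MeasureTheory.integral_Ioc_eq_integral_Ioo]
    apply MeasureTheory.setIntegral_congr_fun measurableSet_Ioo
    intro t ht
    exact G_eq hm1 hmn ht.1.le (ne_of_lt ht.2)
  have e2 := cov_pow hm1 hmn
  have e3 := W_eq_psi ha hb (f_integrable hm1 hmn hg_int)
  have e4 : deriv Real.Gamma a / Real.Gamma a - deriv Real.Gamma b / Real.Gamma b
      = -π * Real.cot (π * a) := by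
    rw [hb_eq]
    exact psi_reflection ha ha1
  rw [e1]
  have e5 : (n:ℝ) * ∫ t in Ioo (0:ℝ) 1, (t ^ (n-m-1) - t ^ (m-1)) / (1 - t ^ n)
      = -π * Real.cot (π * a) := by
    rw [← e2, e3, e4]
  have hcot : Real.cot (π * a) = Real.cot ((m : ℝ) * π / (n : ℝ)) := by
    congr 1
    rw [hadef]
    ring
  rw [hcot] at e5
  field_simp at e5 ⊢
  linarith [e5]
end

section
/- Let n ≥ 1 and β_1,…,β_n be nonnegative integers. Then ∫_{1/2}^1 ∫_{1/2}^{y_1} ⋯ ∫_{1/2}^{y_{n−1}} ∏_{i=1}^n (1−y_i)^{β_i} dy_n ⋯ dy_1 = (1/2)^{n+Σ_j β_j} ∏_{i=1}^n 1/(i + Σ_{j=1}^i β_j). -/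
open MeasureTheory Set

namespace SimplexAux

def S (n : ℕ) (a : ℝ) : Set (Fin n → ℝ) :=
  {y | (∀ i, a ≤ y i ∧ y i ≤ 1) ∧ ∀ i j, i ≤ j → y j ≤ y i}

lemma isClosed_S (n : ℕ) (a : ℝ) : IsClosed (S n a) := by
  have h1 : S n a = (⋂ i, {y : Fin n → ℝ | a ≤ y i ∧ y i ≤ 1}) ∩
      (⋂ i, ⋂ j, ⋂ _h : i ≤ j, {y : Fin n → ℝ | y j ≤ y i}) := by
    ext y; simp [S, forall_and]
  rw [h1]
  apply IsClosed.inter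
  · exact isClosed_iInter fun i =>
      (isClosed_le continuous_const (continuous_apply i)).inter
        (isClosed_le (continuous_apply i) continuous_const)
  · exact isClosed_iInter fun i => isClosed_iInter fun j => isClosed_iInter fun _ =>
      isClosed_le (continuous_apply j) (continuous_apply i)

lemma S_subset (n : ℕ) (a : ℝ) : S n a ⊆ Icc (fun _ => a) (fun _ => 1) := by
  intro y hy
  constructor <;> intro i
  · exact (hy.1 i).1
  · exact (hy.1 i).2

lemma isCompact_S (n : ℕ) (a : ℝ) : IsCompact (S n a) :=
  IsCompact.of_isClosed_subset isCompact_Icc (isClosed_S n a) (S_subset n a)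

lemma Iic_last (n : ℕ) : Finset.Iic (Fin.last n) = Finset.univ := by
  ext j; simp [Fin.le_last]

lemma Iic_castSucc (n : ℕ) (k : Fin n) :
    Finset.Iic (Fin.castSucc k) = Finset.map Fin.castSuccEmb (Finset.Iic k) := by
  ext j
  simp only [Finset.mem_Iic, Finset.mem_map]
  constructor
  · intro hj
    have hj' : (j : ℕ) ≤ (k : ℕ) := hj
    refine ⟨⟨(j : ℕ), by omega⟩, hj', ?_⟩
    exact Fin.ext rfl
  · rintro ⟨j', hj', rfl⟩
    exact Fin.castSucc_le_castSucc_iff.mpr hj'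

lemma key (n : ℕ) : ∀ (β : Fin n → ℕ) (a : ℝ), a ≤ 1 →
    ∫ y in S n a, ∏ i, (1 - y i) ^ (β i) =
      (1 - a) ^ (n + ∑ j, β j) *
        ∏ i : Fin n, 1 / (((i : ℕ) : ℝ) + 1 + ∑ j ∈ Finset.Iic i, (β j : ℝ)) := by
  induction n with
  | zero =>
      intro β a ha
      simp [S, volume_pi, Measure.real]
  | succ n ih =>
      intro β a ha
      -- split off the last coordinate
      set e : ℝ × (Fin n → ℝ) → (Fin (n + 1) → ℝ) :=
        ⇑(MeasurableEquiv.piFinSuccAbove (fun _ : Fin (n + 1) => ℝ) (Fin.last n)).symm with he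
      have hmp : MeasurePreserving e volume volume :=
        (volume_preserving_piFinSuccAbove (fun _ : Fin (n + 1) => ℝ) (Fin.last n)).symm _
      have hemb : MeasurableEmbedding e :=
        (MeasurableEquiv.piFinSuccAbove (fun _ : Fin (n + 1) => ℝ)
          (Fin.last n)).symm.measurableEmbedding
      rw [← hmp.setIntegral_preimage_emb hemb]
      set T := e ⁻¹' S (n + 1) a with hTdef
      have he_apply : ∀ p : ℝ × (Fin n → ℝ), e p = Fin.snoc p.2 p.1 := by
        intro p
        simp [he, MeasurableEquiv.piFinSuccAbove, Fin.insertNthEquiv,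
          Fin.insertNth_last']
      have hT : ∀ p : ℝ × (Fin n → ℝ), p ∈ T ↔ p.1 ∈ Icc a 1 ∧ p.2 ∈ S n p.1 := by
        rintro ⟨t, z⟩
        simp only [hTdef, mem_preimage, he_apply]
        constructor
        · rintro ⟨h1, h2⟩
          refine ⟨⟨?_, ?_⟩, ⟨?_, ?_⟩⟩
          · simpa using (h1 (Fin.last n)).1
          · simpa using (h1 (Fin.last n)).2
          · intro k
            refine ⟨?_, ?_⟩
            · have := h2 (Fin.castSucc k) (Fin.last n) (Fin.le_last _)
              simpa using this
            · simpa using (h1 (Fin.castSucc k)).2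
          · intro i j hij
            have := h2 (Fin.castSucc i) (Fin.castSucc j)
              (by simpa [Fin.castSucc_le_castSucc_iff] using hij)
            simpa using this
        · rintro ⟨⟨hat, ht1⟩, hz1, hz2⟩
          constructor
          · intro i
            refine Fin.lastCases ?_ ?_ i
            · simpa using ⟨hat, ht1⟩
            · intro k
              simpa using ⟨le_trans hat (hz1 k).1, (hz1 k).2⟩
          · intro i j hij
            induction j using Fin.lastCases with
            | last =>
                refine Fin.lastCases ?_ ?_ i
                · simp
                · intro k; simpa using (hz1 k).1
            | cast kj =>
                induction i using Fin.lastCases with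
                | last =>
                    exfalso
                    simp [Fin.le_def] at hij
                    omega
                | cast ki =>
                    have hkk : ki ≤ kj := by
                      simpa [Fin.castSucc_le_castSucc_iff] using hij
                    simpa using hz2 ki kj hkk
      -- set measurability / compactness of T
      have hSm : ∀ t : ℝ, MeasurableSet (S n t) := fun t => (isClosed_S n t).measurableSet
      have hTset : T = {p : ℝ × (Fin n → ℝ) | (a ≤ p.1 ∧ p.1 ≤ 1) ∧
          (∀ i, p.1 ≤ p.2 i ∧ p.2 i ≤ 1) ∧ ∀ i j, i ≤ j → p.2 j ≤ p.2 i} := by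
        ext p
        rw [hT p]
        simp [S, mem_Icc]
      have hTclosed : IsClosed T := by
        rw [hTset]
        have h1 : {p : ℝ × (Fin n → ℝ) | (a ≤ p.1 ∧ p.1 ≤ 1) ∧
            (∀ i, p.1 ≤ p.2 i ∧ p.2 i ≤ 1) ∧ ∀ i j, i ≤ j → p.2 j ≤ p.2 i} =
            ({p : ℝ × (Fin n → ℝ) | a ≤ p.1} ∩ {p | p.1 ≤ 1}) ∩
            ((⋂ i, {p : ℝ × (Fin n → ℝ) | p.1 ≤ p.2 i ∧ p.2 i ≤ 1}) ∩
              ⋂ i, ⋂ j, ⋂ _h : i ≤ j, {p : ℝ × (Fin n → ℝ) | p.2 j ≤ p.2 i}) := by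
          ext p; simp [forall_and]
        rw [h1]
        have hc2 : ∀ i : Fin n, Continuous fun p : ℝ × (Fin n → ℝ) => p.2 i :=
          fun i => by fun_prop
        refine ((isClosed_le continuous_const continuous_fst).inter
          (isClosed_le continuous_fst continuous_const)).inter (IsClosed.inter ?_ ?_)
        · exact isClosed_iInter fun i =>
            (isClosed_le continuous_fst (hc2 i)).inter
              (isClosed_le (hc2 i) continuous_const)
        · exact isClosed_iInter fun i => isClosed_iInter fun j => isClosed_iInter fun _ =>
            isClosed_le (hc2 j) (hc2 i)
      have hTsub : T ⊆ Icc (a, fun _ => a) (1, fun _ => 1) := by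
        intro p hp
        rw [hT p] at hp
        obtain ⟨⟨h1, h2⟩, hz⟩ := hp
        refine ⟨⟨h1, fun i => le_trans h1 (hz.1 i).1⟩, ⟨h2, fun i => (hz.1 i).2⟩⟩
      have hTcompact : IsCompact T :=
        IsCompact.of_isClosed_subset isCompact_Icc hTclosed hTsub
      have hTm : MeasurableSet T := hTclosed.measurableSet
      -- continuity / integrability
      have h1 : ∀ i : Fin (n + 1), Continuous fun p : ℝ × (Fin n → ℝ) => e p i := by
        intro i
        simp only [he_apply]
        induction i using Fin.lastCases with
        | last => simpa only [Fin.snoc_last] using continuous_fst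
        | cast k => simpa only [Fin.snoc_castSucc] using (by fun_prop : Continuous fun p : ℝ × (Fin n → ℝ) => p.2 k)
      have hFcont : Continuous fun p : ℝ × (Fin n → ℝ) => ∏ i : Fin (n + 1), (1 - e p i) ^ β i := by
        apply continuous_finset_prod
        exact fun i _ => (continuous_const.sub (h1 i)).pow _
      have hInt : IntegrableOn (fun p : ℝ × (Fin n → ℝ) => ∏ i : Fin (n + 1), (1 - e p i) ^ β i)
          T volume := ContinuousOn.integrableOn_compact hTcompact hFcont.continuousOn
      rw [← integral_indicator hTm]
      have hIntInd : Integrable (T.indicator fun p : ℝ × (Fin n → ℝ) =>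
          ∏ i : Fin (n + 1), (1 - e p i) ^ β i) ((volume : Measure ℝ).prod volume) := by
        rw [← Measure.volume_eq_prod]
        rwa [integrable_indicator_iff hTm]
      rw [Measure.volume_eq_prod, MeasureTheory.integral_prod _ hIntInd]
      -- compute the inner integral
      have hinner : ∀ t : ℝ, (∫ z : Fin n → ℝ,
          T.indicator (fun p : ℝ × (Fin n → ℝ) => ∏ i : Fin (n + 1), (1 - e p i) ^ β i) (t, z)) =
          (Icc a 1).indicator (fun t => (1 - t) ^ (β (Fin.last n)) *
            ∫ z in S n t, ∏ k : Fin n, (1 - z k) ^ (β (Fin.castSucc k))) t := by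
        intro t
        by_cases ht : t ∈ Icc a 1
        · rw [indicator_of_mem ht]
          have hz : ∀ z : Fin n → ℝ,
              T.indicator (fun p : ℝ × (Fin n → ℝ) => ∏ i : Fin (n + 1), (1 - e p i) ^ β i) (t, z)
              = (S n t).indicator (fun z : Fin n → ℝ => (1 - t) ^ (β (Fin.last n)) *
                  ∏ k : Fin n, (1 - z k) ^ (β (Fin.castSucc k))) z := by
            intro z
            have hval : (∏ i : Fin (n + 1), (1 - e (t, z) i) ^ β i) =
                (1 - t) ^ (β (Fin.last n)) *
                  ∏ k : Fin n, (1 - z k) ^ (β (Fin.castSucc k)) := by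
              rw [he_apply, Fin.prod_univ_castSucc]
              simp [mul_comm]
            by_cases hzs : z ∈ S n t
            · rw [indicator_of_mem ((hT (t, z)).2 ⟨ht, hzs⟩), indicator_of_mem hzs, hval]
            · rw [indicator_of_notMem (fun h => hzs ((hT (t, z)).1 h).2),
                indicator_of_notMem hzs]
          simp_rw [hz]
          rw [integral_indicator (hSm t), integral_const_mul]
        · rw [indicator_of_notMem ht]
          have hz : ∀ z : Fin n → ℝ,
              T.indicator (fun p : ℝ × (Fin n → ℝ) => ∏ i : Fin (n + 1), (1 - e p i) ^ β i) (t, z)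
              = 0 := fun z => indicator_of_notMem (fun h => ht ((hT (t, z)).1 h).1) _
          simp only [hz, integral_zero]
      simp_rw [hinner]
      rw [integral_indicator measurableSet_Icc]
      -- use the induction hypothesis
      set C : ℝ := ∏ i : Fin n,
        1 / (((i : ℕ) : ℝ) + 1 + ∑ j ∈ Finset.Iic i, ((β (Fin.castSucc j) : ℕ) : ℝ)) with hC
      set M : ℕ := β (Fin.last n) + (n + ∑ k : Fin n, β (Fin.castSucc k)) with hMdef
      have hcong : EqOn
          (fun t => (1 - t) ^ (β (Fin.last n)) *
            ∫ z in S n t, ∏ k : Fin n, (1 - z k) ^ (β (Fin.castSucc k)))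
          (fun t => (1 - t) ^ M * C) (Icc a 1) := by
        intro t ht
        have := ih (fun k => β (Fin.castSucc k)) t ht.2
        dsimp only
        rw [this, hMdef, ← mul_assoc, ← pow_add]
      rw [setIntegral_congr_fun measurableSet_Icc hcong]
      rw [integral_mul_const, MeasureTheory.integral_Icc_eq_integral_Ioc,
        ← intervalIntegral.integral_of_le ha,
        show (fun t : ℝ => (1 - t) ^ M) = (fun x : ℝ => x ^ M) ∘ (fun t : ℝ => 1 - t) from rfl]
      rw [show (∫ t in (a : ℝ)..1, ((fun x : ℝ => x ^ M) ∘ (fun t : ℝ => 1 - t)) t)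
          = ∫ x in (1 - 1 : ℝ)..(1 - a), x ^ M from
          intervalIntegral.integral_comp_sub_left (fun x : ℝ => x ^ M) 1]
      rw [integral_pow]
      have hM1 : M + 1 = (n + 1) + ∑ i : Fin (n + 1), β i := by
        rw [Fin.sum_univ_castSucc]; omega
      -- now pure algebra
      rw [Fin.prod_univ_castSucc]
      have hlast : (((Fin.last n : Fin (n + 1)) : ℕ) : ℝ) + 1 +
          ∑ j ∈ Finset.Iic (Fin.last n), ((β j : ℕ) : ℝ) = ((M : ℕ) : ℝ) + 1 := by
        rw [Iic_last, Fin.val_last, hMdef]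
        push_cast [Fin.sum_univ_castSucc]
        ring
      have hCprod : (∏ i : Fin n,
          1 / ((((Fin.castSucc i : Fin (n + 1)) : ℕ) : ℝ) + 1 +
            ∑ j ∈ Finset.Iic (Fin.castSucc i), ((β j : ℕ) : ℝ))) = C := by
        rw [hC]
        refine Finset.prod_congr rfl fun i _ => ?_
        rw [Iic_castSucc, Finset.sum_map]
        have h2 : ∀ j : Fin n, β (Fin.castSuccEmb j) = β (Fin.castSucc j) := fun _ => rfl
        simp only [h2, Fin.coe_castSucc]
      rw [hlast, hCprod, ← hM1]
      have hMne : ((M : ℕ) : ℝ) + 1 ≠ 0 := by positivity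
      rw [show (1 - 1 : ℝ) = 0 by norm_num, zero_pow (by omega : M + 1 ≠ 0)]
      field_simp
      ring

end SimplexAux

open SimplexAux in
theorem simplex_integral_formula (n : ℕ) (hn : 1 ≤ n) (β : Fin n → ℕ) :
    ∫ y in {y : Fin n → ℝ |
        (∀ i : Fin n, (1 : ℝ) / 2 ≤ y i ∧ y i ≤ 1) ∧
          ∀ i j : Fin n, i ≤ j → y j ≤ y i},
      ∏ i : Fin n, (1 - y i) ^ (β i) =
      (1 / 2 : ℝ) ^ (n + ∑ j : Fin n, β j) *
        ∏ i : Fin n, 1 / (((i : ℕ) : ℝ) + 1 + ∑ j ∈ Finset.Iic i, (β j : ℝ)) := by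
  have := key n β (1/2) (by norm_num)
  norm_num [S] at this ⊢
  convert this using 2
end

section
/- Let n ≥ 1 and β_1,…,β_n be nonnegative integers. Then ∫_1^∞ ∫_1^{y_1} ⋯ ∫_1^{y_{n−1}} ∏_{i=1}^n (arccot(y_i))^{β_i}/(y_i²+1) dy_n ⋯ dy_1 = (π/4)^{n+Σ_j β_j} ∏_{i=1}^n 1/(i + Σ_{j=1}^i β_j). -/
open MeasureTheory Real Set

noncomputable def ff (b : ℕ) (t : ℝ) : ℝ := (Real.arctan (1/t))^b / (t^2+1)

lemma my_arctan_nonneg {x : ℝ} (hx : 0 ≤ x) : 0 ≤ Real.arctan x := by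
  simpa [Real.arctan_zero] using Real.arctan_strictMono.monotone hx

lemma ff_nonneg (b : ℕ) {t : ℝ} (ht : 0 < t) : 0 ≤ ff b t := by
  have : (0:ℝ) ≤ Real.arctan (1/t) := my_arctan_nonneg (by positivity)
  unfold ff; positivity

lemma measurable_ff (b : ℕ) : Measurable (ff b) := by
  unfold ff
  exact ((Real.continuous_arctan.measurable.comp
    (measurable_const.div measurable_id)).pow_const b).div
    ((measurable_id.pow_const 2).add_const 1)

lemma hasDerivAt_aux (b : ℕ) {x : ℝ} (hx0 : x ≠ 0) :
    HasDerivAt (fun t : ℝ => -(Real.arctan (1/t))^(b+1) / (b+1)) (ff b x) x := by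
  have h2 : HasDerivAt (fun t : ℝ => 1/t) (-(x^2)⁻¹) x := by
    simpa using (hasDerivAt_inv hx0)
  have h1 : HasDerivAt (fun t : ℝ => Real.arctan (1/t)) (-(1/(x^2+1))) x := by
    have := (Real.hasDerivAt_arctan (1/x)).comp x h2
    refine this.congr_deriv ?_
    have h4 : (1:ℝ) + (1/x)^2 ≠ 0 := by positivity
    field_simp
  have h3 := ((h1.pow (b+1)).neg).div_const ((b:ℝ)+1)
  refine h3.congr_deriv ?_
  have hb : ((b:ℝ)+1) ≠ 0 := by positivity
  unfold ff
  push_cast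
  field_simp

lemma tendsto_aux (b : ℕ) :
    Filter.Tendsto (fun t : ℝ => -(Real.arctan (1/t))^(b+1) / (b+1))
      Filter.atTop (nhds 0) := by
  have h1 : Filter.Tendsto (fun t : ℝ => Real.arctan (1/t)) Filter.atTop (nhds 0) := by
    have := (Real.continuous_arctan.tendsto 0).comp
      (tendsto_inv_atTop_zero : Filter.Tendsto (fun r : ℝ => r⁻¹) Filter.atTop (nhds 0))
    simpa [Function.comp_def, Real.arctan_zero, one_div] using this
  have := ((h1.pow (b+1)).neg).div_const ((b:ℝ)+1)
  simpa using this

lemma oneDim (b : ℕ) {a : ℝ} (ha : 0 < a) :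
    ∫ t in Ioi a, ff b t = (Real.arctan (1/a))^(b+1) / ((b:ℝ)+1) := by
  have hnn : ∀ x ∈ Ioi a, 0 ≤ ff b x := fun x hx => ff_nonneg b (ha.trans hx)
  have := integral_Ioi_of_hasDerivAt_of_nonneg'
    (g := fun t : ℝ => -(Real.arctan (1/t))^(b+1) / (b+1))
    (g' := fun t : ℝ => ff b t) (a := a) (l := 0)
    (fun x hx => hasDerivAt_aux b (lt_of_lt_of_le ha hx).ne') hnn (tendsto_aux b)
  rw [this]
  ring

lemma oneDim_integrable (b : ℕ) {a : ℝ} (ha : 0 < a) :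
    IntegrableOn (fun t : ℝ => ff b t) (Ioi a) := by
  have hnn : ∀ x ∈ Ioi a, 0 ≤ ff b x := fun x hx => ff_nonneg b (ha.trans hx)
  exact integrableOn_Ioi_deriv_of_nonneg'
    (fun x hx => hasDerivAt_aux b (lt_of_lt_of_le ha hx).ne') hnn (tendsto_aux b)

lemma oneDimL (b : ℕ) {a : ℝ} (ha : 0 < a) :
    ∫⁻ t in Ici a, ENNReal.ofReal (ff b t) =
      ENNReal.ofReal ((Real.arctan (1/a))^(b+1) / ((b:ℝ)+1)) := by
  rw [← Measure.restrict_congr_set Ioi_ae_eq_Ici]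
  rw [← ofReal_integral_eq_lintegral_ofReal (oneDim_integrable b ha)
    (by filter_upwards [ae_restrict_mem measurableSet_Ioi] with x hx
        exact ff_nonneg b (ha.trans hx))]
  rw [oneDim b ha]

def Sset (n : ℕ) : Set (Fin n → ℝ) :=
  {y | (∀ i, (1:ℝ) ≤ y i) ∧ ∀ i j, i ≤ j → y j ≤ y i}

lemma measurableSet_Sset (n : ℕ) : MeasurableSet (Sset n) := by
  have : Sset n = (⋂ i, {y : Fin n → ℝ | 1 ≤ y i}) ∩
      ⋂ (i) (j) (_ : i ≤ j), {y : Fin n → ℝ | y j ≤ y i} := by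
    ext y; simp [Sset]
  rw [this]
  exact (MeasurableSet.iInter fun i =>
      measurableSet_le measurable_const (measurable_pi_apply i)).inter
    (MeasurableSet.iInter fun i => MeasurableSet.iInter fun j => MeasurableSet.iInter fun _ =>
      measurableSet_le (measurable_pi_apply j) (measurable_pi_apply i))

noncomputable def ins {n : ℕ} (t : ℝ) (r : Fin (n+1) → ℝ) : Fin (n+2) → ℝ :=
  Fin.insertNth (α := fun _ : Fin (n+2) => ℝ) 0 t r

lemma ins_apply_zero {n : ℕ} (t : ℝ) (r : Fin (n+1) → ℝ) : ins t r 0 = t := by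
  simp [ins]

lemma ins_apply_succ {n : ℕ} (t : ℝ) (r : Fin (n+1) → ℝ) (j : Fin (n+1)) :
    ins t r j.succ = r j := by
  simp [ins]

lemma mem_Sset_ins {n : ℕ} (t : ℝ) (r : Fin (n+1) → ℝ) :
    ins t r ∈ Sset (n+2) ↔ r ∈ Sset (n+1) ∧ r 0 ≤ t := by
  constructor
  · rintro ⟨h1, h2⟩
    refine ⟨⟨fun i => by simpa [ins_apply_succ] using h1 i.succ,
      fun i j hij => by
        have := h2 i.succ j.succ (by simpa [Fin.succ_le_succ_iff] using hij)
        simpa [ins_apply_succ] using this⟩, ?_⟩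
    have := h2 0 (Fin.succ 0) (Fin.zero_le _)
    rw [ins_apply_zero, ins_apply_succ] at this; exact this
  · rintro ⟨⟨h1, h2⟩, h3⟩
    constructor
    · intro i
      induction i using Fin.cases with
      | zero => rw [ins_apply_zero]; exact (h1 0).trans h3
      | succ i => rw [ins_apply_succ]; exact h1 i
    · intro i j hij
      induction i using Fin.cases with
      | zero =>
        induction j using Fin.cases with
        | zero => exact le_refl _
        | succ j =>
          rw [ins_apply_zero, ins_apply_succ]
          exact (h2 0 j (Fin.zero_le _)).trans h3
      | succ i =>
        induction j using Fin.cases with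
        | zero => exact absurd hij (by simp [Fin.le_zero_iff, Fin.succ_ne_zero])
        | succ j =>
          rw [ins_apply_succ, ins_apply_succ]
          exact h2 i j (by simpa [Fin.succ_le_succ_iff] using hij)

noncomputable def RHS (n : ℕ) (β : Fin (n+1) → ℕ) : ℝ :=
  (π/4)^(n+1+∑ i, β i) *
    ∏ i : Fin (n+1), 1/(((i:ℕ):ℝ) + 1 + ∑ j ∈ Finset.Iic i, (β j:ℝ))

def βs {n : ℕ} (β : Fin (n+2) → ℕ) : Fin (n+1) → ℕ :=
  Fin.cons (β 0 + β 1 + 1) (fun j => β j.succ.succ)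

lemma Iic_sum_eq_if {m : ℕ} (g : Fin m → ℝ) (k : Fin m) :
    ∑ j ∈ Finset.Iic k, g j = ∑ j : Fin m, if j ≤ k then g j else 0 := by
  rw [show Finset.Iic k = Finset.filter (· ≤ k) Finset.univ from by ext; simp,
    Finset.sum_filter]

lemma Iic_sum_lemma (n : ℕ) (β : Fin (n+2) → ℕ) (i : Fin (n+1)) :
    ∑ j ∈ Finset.Iic i, ((βs β j : ℝ)) = (∑ j ∈ Finset.Iic i.succ, (β j : ℝ)) + 1 := by
  have h1 : (1 : Fin (n+2)) ≤ i.succ := by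
    rw [← Fin.succ_zero_eq_one, Fin.succ_le_succ_iff]; exact Fin.zero_le _
  rw [Iic_sum_eq_if, Iic_sum_eq_if, Fin.sum_univ_succ, Fin.sum_univ_succ, Fin.sum_univ_succ]
  simp only [βs, Fin.cons_zero, Fin.cons_succ, Fin.succ_le_succ_iff, Fin.zero_le, if_true,
    Fin.succ_zero_eq_one, h1]
  push_cast
  ring

lemma RHS_rec (n : ℕ) (β : Fin (n+2) → ℕ) :
    RHS (n+1) β = (1/((β 0:ℝ)+1)) * RHS n (βs β) := by
  unfold RHS
  have hexp : (n+1+1+∑ i, β i) = (n+1+∑ i, βs β i) := by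
    simp [βs, Fin.sum_univ_succ]; ring
  rw [hexp, Fin.prod_univ_succ]
  have h0 : Finset.Iic (0 : Fin (n+2)) = {0} := by ext j; simp [Fin.le_zero_iff]
  have hprod : ∀ i : Fin (n+1),
      (1:ℝ)/((((i.succ : Fin (n+2)) :ℕ):ℝ) + 1 + ∑ j ∈ Finset.Iic i.succ, (β j:ℝ)) =
      1/(((i:ℕ):ℝ) + 1 + ∑ j ∈ Finset.Iic i, ((βs β j : ℝ))) := by
    intro i
    rw [Iic_sum_lemma n β i]
    push_cast [Fin.val_succ]
    ring_nf
  rw [Finset.prod_congr rfl (fun i _ => hprod i), h0]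
  simp only [Finset.sum_singleton, Fin.val_zero, βs]
  ring

lemma RHS_nonneg (n : ℕ) (β : Fin (n+1) → ℕ) : 0 ≤ RHS n β := by
  unfold RHS
  apply mul_nonneg (pow_nonneg (by positivity) _)
  apply Finset.prod_nonneg
  intro i _
  apply div_nonneg zero_le_one
  have : (0:ℝ) ≤ ∑ j ∈ Finset.Iic i, (β j:ℝ) :=
    Finset.sum_nonneg fun j _ => Nat.cast_nonneg _
  positivity

lemma measurable_prod_ff {m : ℕ} (β : Fin m → ℕ) :
    Measurable (fun y : Fin m → ℝ => ∏ i, ff (β i) (y i)) :=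
  Finset.measurable_prod _ fun i _ => (measurable_ff (β i)).comp (measurable_pi_apply i)

lemma key : ∀ (n : ℕ) (β : Fin (n+1) → ℕ),
    ∫⁻ y in Sset (n+1), ENNReal.ofReal (∏ i, ff (β i) (y i)) = ENNReal.ofReal (RHS n β) := by
  intro n
  induction n with
  | zero =>
    intro β
    have hS : Sset 1 = {y : Fin 1 → ℝ | 1 ≤ y 0} := by
      ext y
      constructor
      · rintro ⟨h1, _⟩; exact h1 0
      · intro h
        exact ⟨fun i => by rw [Subsingleton.elim i 0]; exact h,
          fun i j _ => by rw [Subsingleton.elim i j]⟩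
    rw [← lintegral_indicator (measurableSet_Sset 1)]
    have MP : MeasurePreserving (MeasurableEquiv.funUnique (Fin 1) ℝ).symm volume volume :=
      (volume_preserving_funUnique (Fin 1) ℝ).symm
    rw [← MP.lintegral_comp (((measurable_prod_ff β).ennreal_ofReal).indicator
      (measurableSet_Sset 1))]
    have heq : (fun t : ℝ => (Sset 1).indicator
        (fun y => ENNReal.ofReal (∏ i, ff (β i) (y i)))
        ((MeasurableEquiv.funUnique (Fin 1) ℝ).symm t)) =
        (Ici (1:ℝ)).indicator (fun t => ENNReal.ofReal (ff (β 0) t)) := by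
      funext t
      have hsymm : (MeasurableEquiv.funUnique (Fin 1) ℝ).symm t = fun _ => t := rfl
      by_cases ht : (1:ℝ) ≤ t
      · rw [hsymm, indicator_of_mem (by rw [hS]; exact ht),
          indicator_of_mem (by exact ht : t ∈ Ici (1:ℝ))]
        congr 1
        simp [Fin.prod_univ_one]
      · rw [hsymm, indicator_of_notMem (by rw [hS]; exact ht),
          indicator_of_notMem (by exact ht : t ∉ Ici (1:ℝ))]
    rw [heq, lintegral_indicator measurableSet_Ici, oneDimL (β 0) one_pos]
    congr 1
    have h0 : Finset.Iic (0 : Fin 1) = {0} := by ext j; simp [Subsingleton.elim j 0]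
    unfold RHS
    rw [Fin.sum_univ_one, Fin.prod_univ_one, h0]
    simp only [Finset.sum_singleton, Fin.val_zero, Real.arctan_one]
    rw [show (1:ℝ)/1 = 1 by norm_num, Real.arctan_one]
    push_cast
    field_simp
    ring
  | succ n ih =>
    intro β
    set F : (Fin (n+2) → ℝ) → ENNReal :=
      (Sset (n+2)).indicator (fun y => ENNReal.ofReal (∏ i, ff (β i) (y i))) with hF
    have hFmeas : Measurable F :=
      ((measurable_prod_ff β).ennreal_ofReal).indicator (measurableSet_Sset (n+2))
    rw [← lintegral_indicator (measurableSet_Sset (n+2)), ← hF]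
    set e := MeasurableEquiv.piFinSuccAbove (fun _ : Fin (n+2) => ℝ) 0 with he
    have MP := (volume_preserving_piFinSuccAbove (fun _ : Fin (n+2) => ℝ) 0).symm
    rw [← MP.lintegral_comp hFmeas]
    rw [Measure.volume_eq_prod]
    rw [lintegral_prod_symm' (fun z : ℝ × (Fin (n+1) → ℝ) => F (e.symm z))
      (hFmeas.comp e.symm.measurable)]
    have hsymm : ∀ (t : ℝ) (r : Fin (n+1) → ℝ), e.symm (t, r) = ins t r := fun t r => rfl
    have hc : (0:ℝ) ≤ 1/((β 0:ℝ)+1) := by positivity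
    have hinner : ∀ r : Fin (n+1) → ℝ, (∫⁻ t, F (e.symm (t, r))) =
        (Sset (n+1)).indicator
          (fun r => ENNReal.ofReal ((1/((β 0:ℝ)+1)) * ∏ j, ff (βs β j) (r j))) r := by
      intro r
      by_cases hr : r ∈ Sset (n+1)
      · have hr0 : (0:ℝ) < r 0 := lt_of_lt_of_le one_pos (hr.1 0)
        have hCnn : 0 ≤ ∏ j, ff (β j.succ) (r j) :=
          Finset.prod_nonneg fun j _ => ff_nonneg _ (lt_of_lt_of_le one_pos (hr.1 j))
        have hfun : (fun t => F (e.symm (t, r))) =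
            (Ici (r 0)).indicator
              (fun t => ENNReal.ofReal ((∏ j, ff (β j.succ) (r j)) * ff (β 0) t)) := by
          funext t
          rw [hsymm]
          by_cases ht : r 0 ≤ t
          · rw [hF, indicator_of_mem ((mem_Sset_ins t r).2 ⟨hr, ht⟩),
              indicator_of_mem (by exact ht : t ∈ Ici (r 0))]
            congr 1
            rw [Fin.prod_univ_succ]
            simp only [ins_apply_zero, ins_apply_succ]
            ring
          · rw [hF, indicator_of_notMem (fun hmem => ht ((mem_Sset_ins t r).1 hmem).2),
              indicator_of_notMem (by exact ht : t ∉ Ici (r 0))]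
        rw [hfun, lintegral_indicator measurableSet_Ici]
        have hsplit : ∀ t ∈ Ici (r 0),
            ENNReal.ofReal ((∏ j, ff (β j.succ) (r j)) * ff (β 0) t) =
            ENNReal.ofReal (∏ j, ff (β j.succ) (r j)) * ENNReal.ofReal (ff (β 0) t) := by
          intro t _
          exact ENNReal.ofReal_mul hCnn
        rw [setLIntegral_congr_fun measurableSet_Ici
          hsplit]
        rw [lintegral_const_mul'' _ ((measurable_ff (β 0)).ennreal_ofReal.aemeasurable)]
        rw [oneDimL (β 0) hr0]
        rw [indicator_of_mem hr]
        rw [← ENNReal.ofReal_mul hCnn]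
        congr 1
        rw [Fin.prod_univ_succ (f := fun j : Fin (n+1) => ff (β j.succ) (r j)),
          Fin.prod_univ_succ (f := fun j : Fin (n+1) => ff (βs β j) (r j))]
        simp only [βs, Fin.cons_zero, Fin.cons_succ, Fin.succ_zero_eq_one]
        unfold ff
        have hb : ((β 0:ℝ)+1) ≠ 0 := by positivity
        have hr2 : (r 0)^2 + 1 ≠ 0 := by positivity
        have hpow : β 0 + β 1 + 1 = (β 0 + 1) + β 1 := by ring
        rw [hpow, pow_add, pow_add]
        push_cast
        field_simp
        ring
      · have hzero : (fun t => F (e.symm (t, r))) = fun _ => 0 := by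
          funext t
          rw [hsymm, hF]
          exact indicator_of_notMem (fun hmem => hr ((mem_Sset_ins t r).1 hmem).1) _
        rw [hzero, lintegral_zero, indicator_of_notMem hr]
    rw [lintegral_congr hinner]
    rw [lintegral_indicator (measurableSet_Sset (n+1))]
    have hsplit2 : ∀ r : Fin (n+1) → ℝ,
        ENNReal.ofReal ((1/((β 0:ℝ)+1)) * ∏ j, ff (βs β j) (r j)) =
        ENNReal.ofReal (1/((β 0:ℝ)+1)) * ENNReal.ofReal (∏ j, ff (βs β j) (r j)) :=
      fun r => ENNReal.ofReal_mul hc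
    simp_rw [hsplit2]
    rw [lintegral_const_mul'' _ ((measurable_prod_ff (βs β)).ennreal_ofReal.aemeasurable)]
    rw [ih (βs β)]
    rw [← ENNReal.ofReal_mul hc, ← RHS_rec n β]

theorem hyperbolic_simplex_integral_formula (n : ℕ) (hn : 1 ≤ n) (β : Fin n → ℕ) :
    ∫ y in {y : Fin n → ℝ |
        (∀ i : Fin n, (1 : ℝ) ≤ y i) ∧
          ∀ i j : Fin n, i ≤ j → y j ≤ y i},
      ∏ i : Fin n, (Real.arctan (1 / y i)) ^ (β i) / ((y i) ^ 2 + 1) =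
      (π / 4 : ℝ) ^ (n + ∑ j : Fin n, β j) *
        ∏ i : Fin n, 1 / (((i : ℕ) : ℝ) + 1 + ∑ j ∈ Finset.Iic i, (β j : ℝ)) := by
  obtain ⟨m, rfl⟩ : ∃ m, n = m + 1 := ⟨n - 1, (Nat.succ_pred_eq_of_pos hn).symm⟩
  have hset : {y : Fin (m+1) → ℝ |
      (∀ i : Fin (m+1), (1 : ℝ) ≤ y i) ∧
        ∀ i j : Fin (m+1), i ≤ j → y j ≤ y i} = Sset (m+1) := rfl
  rw [hset]
  have hfeq : ∀ y : Fin (m+1) → ℝ,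
      (∏ i : Fin (m+1), (Real.arctan (1 / y i)) ^ (β i) / ((y i) ^ 2 + 1)) =
      ∏ i, ff (β i) (y i) := fun y => rfl
  have hnn : 0 ≤ᵐ[volume.restrict (Sset (m+1))]
      fun y : Fin (m+1) → ℝ => ∏ i, ff (β i) (y i) := by
    filter_upwards [ae_restrict_mem (measurableSet_Sset (m+1))] with y hy
    exact Finset.prod_nonneg fun i _ => ff_nonneg _ (lt_of_lt_of_le one_pos (hy.1 i))
  rw [show (fun y : Fin (m+1) → ℝ =>
      ∏ i : Fin (m+1), (Real.arctan (1 / y i)) ^ (β i) / ((y i) ^ 2 + 1)) =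
      fun y => ∏ i, ff (β i) (y i) from funext hfeq]
  rw [integral_eq_lintegral_of_nonneg_ae hnn
    ((measurable_prod_ff β).aestronglyMeasurable)]
  rw [key m β, ENNReal.toReal_ofReal (RHS_nonneg m β)]
  rfl
end
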